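/- Let n be a positive integer, p ∈ [1, ∞], and let A, X_L, X_U, Û be real n×n matrices. Set α = ‖X_L·A − Û‖_p·‖X_U‖_p and β = ‖Û·X_U − I‖_p. Then X_L·A·X_U = I + (X_L·A − Û)·X_U + (Û·X_U − I), and if α + β < 1, then A is nonsingular and ‖A⁻¹‖_p ≤ ‖X_L‖_p·‖X_U‖_p/(1 − α − β). -/
import Mathlib

open Matrix

/-- Operator norm on real square matrices induced by the `ℓ^p` vector norm. -/
noncomputable def lpOpNorm (p : ENNReal) [Fact (1 ≤ p)] {n : ℕ}
    (M : Matrix (Fin n) (Fin n) ℝ) : ℝ :=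
  ‖LinearMap.toContinuousLinearMap
    ((WithLp.linearEquiv p ℝ (Fin n → ℝ)).symm.toLinearMap ∘ₗ M.mulVecLin ∘ₗ
      (WithLp.linearEquiv p ℝ (Fin n → ℝ)).toLinearMap)‖

noncomputable def lpCLM (p : ENNReal) [Fact (1 ≤ p)] {n : ℕ}
    (M : Matrix (Fin n) (Fin n) ℝ) :
    WithLp p (Fin n → ℝ) →L[ℝ] WithLp p (Fin n → ℝ) :=
  LinearMap.toContinuousLinearMap
    ((WithLp.linearEquiv p ℝ (Fin n → ℝ)).symm.toLinearMap ∘ₗ M.mulVecLin ∘ₗ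
      (WithLp.linearEquiv p ℝ (Fin n → ℝ)).toLinearMap)

lemma lpOpNorm_eq (p : ENNReal) [Fact (1 ≤ p)] {n : ℕ}
    (M : Matrix (Fin n) (Fin n) ℝ) : lpOpNorm p M = ‖lpCLM p M‖ := rfl

lemma lpCLM_apply (p : ENNReal) [Fact (1 ≤ p)] {n : ℕ}
    (M : Matrix (Fin n) (Fin n) ℝ) (x : WithLp p (Fin n → ℝ)) :
    lpCLM p M x = (WithLp.linearEquiv p ℝ (Fin n → ℝ)).symm
      (M.mulVec ((WithLp.linearEquiv p ℝ (Fin n → ℝ)) x)) := rfl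

lemma lpCLM_mul (p : ENNReal) [Fact (1 ≤ p)] {n : ℕ}
    (M N : Matrix (Fin n) (Fin n) ℝ) :
    lpCLM p (M * N) = (lpCLM p M).comp (lpCLM p N) := by
  ext x
  simp [lpCLM_apply, mulVec_mulVec]

lemma lpCLM_one (p : ENNReal) [Fact (1 ≤ p)] {n : ℕ} :
    lpCLM p (1 : Matrix (Fin n) (Fin n) ℝ) = ContinuousLinearMap.id ℝ _ := by
  ext x
  simp [lpCLM_apply]

lemma lpCLM_add (p : ENNReal) [Fact (1 ≤ p)] {n : ℕ}
    (M N : Matrix (Fin n) (Fin n) ℝ) :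
    lpCLM p (M + N) = lpCLM p M + lpCLM p N := by
  ext x
  simp [lpCLM_apply, add_mulVec]

lemma lpCLM_sub (p : ENNReal) [Fact (1 ≤ p)] {n : ℕ}
    (M N : Matrix (Fin n) (Fin n) ℝ) :
    lpCLM p (M - N) = lpCLM p M - lpCLM p N := by
  ext x
  simp [lpCLM_apply, sub_mulVec]
theorem stmt10 {n : ℕ} (hn : 0 < n) (p : ENNReal) [Fact (1 ≤ p)]
    (A XL XU Uhat : Matrix (Fin n) (Fin n) ℝ) (α β : ℝ)
    (hα : α = lpOpNorm p (XL * A - Uhat) * lpOpNorm p XU)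
    (hβ : β = lpOpNorm p (Uhat * XU - 1)) :
    XL * A * XU = 1 + (XL * A - Uhat) * XU + (Uhat * XU - 1) ∧
      (α + β < 1 →
        IsUnit A ∧ lpOpNorm p A⁻¹ ≤ lpOpNorm p XL * lpOpNorm p XU / (1 - α - β)) := by
  have part1 : XL * A * XU = 1 + (XL * A - Uhat) * XU + (Uhat * XU - 1) := by
    noncomm_ring
  refine ⟨part1, fun hlt => ?_⟩
  haveI : Nonempty (Fin n) := ⟨⟨0, hn⟩⟩
  haveI : Nontrivial (WithLp p (Fin n → ℝ)) := (WithLp.equiv p (Fin n → ℝ)).nontrivial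
  set t : Matrix (Fin n) (Fin n) ℝ := (XL * A - Uhat) * XU + (Uhat * XU - 1) with ht
  have hM : XL * A * XU = 1 + t := by rw [part1, ht, add_assoc]
  -- norm bound on t
  have htle : ‖lpCLM p t‖ ≤ α + β := by
    rw [ht, lpCLM_add, lpCLM_mul]
    refine le_trans (norm_add_le _ _) ?_
    have h1 : ‖(lpCLM p (XL * A - Uhat)).comp (lpCLM p XU)‖ ≤
        ‖lpCLM p (XL * A - Uhat)‖ * ‖lpCLM p XU‖ := ContinuousLinearMap.opNorm_comp_le _ _
    rw [hα, hβ, lpOpNorm_eq, lpOpNorm_eq, lpOpNorm_eq]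
    linarith
  have ht1 : ‖lpCLM p t‖ < 1 := lt_of_le_of_lt htle hlt
  have htneg : ‖-(lpCLM p t)‖ < 1 := by rwa [norm_neg]
  set u : (WithLp p (Fin n → ℝ) →L[ℝ] WithLp p (Fin n → ℝ))ˣ :=
    Units.oneSub (-(lpCLM p t)) htneg with hu
  have huval : (u : WithLp p (Fin n → ℝ) →L[ℝ] WithLp p (Fin n → ℝ))
      = lpCLM p (XL * A * XU) := by
    rw [hM, lpCLM_add, lpCLM_one, hu, Units.val_oneSub, sub_neg_eq_add]
    rfl
  -- the matrix XL * A * XU is a unit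
  have hMunit : IsUnit (XL * A * XU) := by
    rw [← Matrix.mulVec_injective_iff_isUnit]
    intro x y hxy
    have hx : lpCLM p (XL * A * XU) ((WithLp.equiv p (Fin n → ℝ)).symm x)
        = lpCLM p (XL * A * XU) ((WithLp.equiv p (Fin n → ℝ)).symm y) := by
      simp only [lpCLM_apply]
      exact congrArg _ (by simpa using hxy)
    have : Function.Injective (lpCLM p (XL * A * XU)) := by
      rw [← huval]
      intro a b hab
      have := congrArg (fun z => (↑u⁻¹ : WithLp p (Fin n → ℝ) →L[ℝ] WithLp p (Fin n → ℝ)) z) hab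
      simpa [← ContinuousLinearMap.comp_apply, ← ContinuousLinearMap.mul_def, u.inv_mul]
        using this
    have := this hx
    simpa using congrArg (WithLp.equiv p (Fin n → ℝ)) this
  -- unit factors
  have hdet : IsUnit (XL.det * A.det * XU.det) := by
    simpa [Matrix.det_mul] using hMunit.map Matrix.detMonoidHom
  have hdetA : IsUnit A.det := by
    rcases isUnit_of_mul_isUnit_left hdet with h'
    exact isUnit_of_mul_isUnit_right h'
  have hdetXL : IsUnit XL.det := isUnit_of_mul_isUnit_left (isUnit_of_mul_isUnit_left hdet)
  have hdetXU : IsUnit XU.det := isUnit_of_mul_isUnit_right hdet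
  have hAunit : IsUnit A := (Matrix.isUnit_iff_isUnit_det A).2 hdetA
  refine ⟨hAunit, ?_⟩
  -- express A⁻¹
  have hAinv : A⁻¹ = XU * (XL * A * XU)⁻¹ * XL := by
    rw [Matrix.mul_inv_rev, Matrix.mul_inv_rev]
    rw [← Matrix.mul_assoc, ← Matrix.mul_assoc]
    rw [Matrix.mul_nonsing_inv XU hdetXU, Matrix.one_mul, Matrix.mul_assoc,
      Matrix.nonsing_inv_mul XL hdetXL, Matrix.mul_one]
  -- lpCLM of the inverse is the inverse unit
  have hinvCLM : lpCLM p (XL * A * XU)⁻¹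
      = (↑u⁻¹ : WithLp p (Fin n → ℝ) →L[ℝ] WithLp p (Fin n → ℝ)) := by
    have h1 : lpCLM p (XL * A * XU) * lpCLM p (XL * A * XU)⁻¹ = 1 := by
      rw [ContinuousLinearMap.mul_def, ← lpCLM_mul,
        Matrix.mul_nonsing_inv _ (by simpa [Matrix.det_mul] using hdet), lpCLM_one]
      rfl
    calc lpCLM p (XL * A * XU)⁻¹ = 1 * lpCLM p (XL * A * XU)⁻¹ := (one_mul _).symm
      _ = ↑u⁻¹ * (lpCLM p (XL * A * XU) * lpCLM p (XL * A * XU)⁻¹) := by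
          rw [← mul_assoc, ← huval, u.inv_mul]
      _ = ↑u⁻¹ := by rw [h1, mul_one]
  -- norm of the inverse
  have hinvnorm : ‖lpCLM p (XL * A * XU)⁻¹‖ ≤ (1 - (α + β))⁻¹ := by
    rw [hinvCLM]
    have h2 : ‖(↑u⁻¹ : WithLp p (Fin n → ℝ) →L[ℝ] WithLp p (Fin n → ℝ))‖ ≤
        ‖(1 : WithLp p (Fin n → ℝ) →L[ℝ] WithLp p (Fin n → ℝ))‖ - 1
          + (1 - ‖-(lpCLM p t)‖)⁻¹ :=
      tsum_geometric_le_of_norm_lt_one _ htneg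
    rw [norm_one, norm_neg] at h2
    have h3 : (1 - ‖lpCLM p t‖)⁻¹ ≤ (1 - (α + β))⁻¹ := by
      apply inv_anti₀ (by linarith) (by linarith)
    linarith
  -- finish
  rw [hAinv, lpOpNorm_eq, lpCLM_mul, lpCLM_mul]
  have hXU0 : (0:ℝ) ≤ ‖lpCLM p XU‖ := norm_nonneg _
  have hXL0 : (0:ℝ) ≤ ‖lpCLM p XL‖ := norm_nonneg _
  have hc1 : ‖(lpCLM p XU).comp ((lpCLM p (XL * A * XU)⁻¹).comp (lpCLM p XL))‖ ≤
      ‖lpCLM p XU‖ * (‖lpCLM p (XL * A * XU)⁻¹‖ * ‖lpCLM p XL‖) :=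
    le_trans (ContinuousLinearMap.opNorm_comp_le _ _)
      (by gcongr; exact ContinuousLinearMap.opNorm_comp_le _ _)
  have hub : ‖lpCLM p XU‖ * (‖lpCLM p (XL * A * XU)⁻¹‖ * ‖lpCLM p XL‖) ≤
      ‖lpCLM p XU‖ * ((1 - (α + β))⁻¹ * ‖lpCLM p XL‖) := by
    gcongr
  rw [lpOpNorm_eq, lpOpNorm_eq]
  have : ‖lpCLM p XL‖ * ‖lpCLM p XU‖ / (1 - α - β)
      = ‖lpCLM p XU‖ * ((1 - (α + β))⁻¹ * ‖lpCLM p XL‖) := by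
    field_simp
    ring
  rw [this]
  exact le_trans hc1 hub
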